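/- Let A > 0 and let F₁, F₂ ∈ ℝ^d be constant vectors with F₁^d > 0 and F₂^d ≥ 0 (superscript d denotes the d-th coordinate). Let Λ be the closure of a nonempty open connected subset of the half-space Π₁ = {y ∈ ℝ^d : y^d < A}, and suppose v(x) = 0 for all x ∈ Λ. Then there are no collisions on [0,∞) (y(t,x₁) ≠ y(t,x₂) for all t ≥ 0 and all x₁ ≠ x₂ in Λ) if and only if F₁^d ≤ F₂^d. -/

import Mathlib

open Set

/-- Trajectory of a particle starting at rest at `x` with `x^d < A`: it moves with constant
acceleration `F₁` until the first time `T(x) = √(2(A − x^d)/F₁^d)` at which its `d`-th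
coordinate reaches `A`, and with constant acceleration `F₂` afterwards. -/
noncomputable def stepTrajMulti {n : ℕ} (F₁ F₂ : EuclideanSpace ℝ (Fin (n + 1))) (A : ℝ)
    (x : EuclideanSpace ℝ (Fin (n + 1))) (t : ℝ) : EuclideanSpace ℝ (Fin (n + 1)) :=
  let T := Real.sqrt (2 * (A - x (Fin.last n)) / F₁ (Fin.last n))
  if t ≤ T then x + (t ^ 2 / 2) • F₁
  else x + (T ^ 2 / 2) • F₁ + ((t - T) * T) • F₁ + ((t - T) ^ 2 / 2) • F₂

noncomputable def stepT (f A a : ℝ) : ℝ := Real.sqrt (2 * (A - a) / f)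

noncomputable def stepQ (f A a t : ℝ) : ℝ := (max (t - stepT f A a) 0) ^ 2 / 2

lemma stepT_nonneg (f A a : ℝ) : 0 ≤ stepT f A a := Real.sqrt_nonneg _

lemma stepQ_mono {f A a a' : ℝ} (t : ℝ) (h : stepT f A a' ≤ stepT f A a) :
    stepQ f A a t ≤ stepQ f A a' t := by
  unfold stepQ
  have h1 : max (t - stepT f A a) 0 ≤ max (t - stepT f A a') 0 :=
    max_le_max (by linarith) le_rfl
  have h2 : (0:ℝ) ≤ max (t - stepT f A a) 0 := le_max_right _ _
  nlinarith

lemma stepT_antitone {f A a a' : ℝ} (h : a ≤ a') (hf : 0 < f) :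
    stepT f A a' ≤ stepT f A a := by
  unfold stepT
  apply Real.sqrt_le_sqrt
  apply div_le_div_of_nonneg_right (by linarith) hf.le

lemma stepQ_zero (f A a : ℝ) : stepQ f A a 0 = 0 := by
  unfold stepQ
  rw [max_eq_right (by have := stepT_nonneg f A a; linarith)]
  norm_num

lemma stepTraj_eq {n : ℕ} (F₁ F₂ : EuclideanSpace ℝ (Fin (n + 1))) (A : ℝ)
    (x : EuclideanSpace ℝ (Fin (n + 1))) (t : ℝ) :
    stepTrajMulti F₁ F₂ A x t =
      x + (t ^ 2 / 2) • F₁ +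
        (stepQ (F₁ (Fin.last n)) A (x (Fin.last n)) t) • (F₂ - F₁) := by
  simp only [stepTrajMulti, stepQ, stepT]
  set T := Real.sqrt (2 * (A - x (Fin.last n)) / F₁ (Fin.last n)) with hT
  split_ifs with h
  · have : max (t - T) 0 = 0 := max_eq_right (by linarith)
    rw [this]
    norm_num
  · push_neg at h
    have : max (t - T) 0 = t - T := max_eq_left (by linarith)
    rw [this]
    match_scalars <;> ring

/-- 1-D collision-time construction -/
lemma exists_collision_time (f A a₁ a₂ s : ℝ) (hf : 0 < f) (ha₁ : a₁ < A)
    (ha₂ : a₂ < a₁) (hs : 0 < s) :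
    ∃ t, 0 ≤ t ∧ stepQ f A a₁ t - stepQ f A a₂ t = s := by
  set T₁ := stepT f A a₁ with hT1
  set T₂ := stepT f A a₂ with hT2
  have hT1n : 0 ≤ T₁ := stepT_nonneg _ _ _
  have hT2n : 0 ≤ T₂ := stepT_nonneg _ _ _
  have hT12 : T₁ < T₂ := by
    rw [hT1, hT2]
    unfold stepT
    apply Real.sqrt_lt_sqrt (div_nonneg (by linarith) hf.le)
    rw [div_lt_div_iff₀ hf hf]
    nlinarith
  set d := T₂ - T₁ with hd
  have hdpos : 0 < d := by rw [hd]; linarith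
  set k := s / d with hk
  have hkpos : 0 < k := div_pos hs hdpos
  have hks : s = k * d := by rw [hk]; field_simp
  set tstar := T₂ + k with hts
  have h1 : stepQ f A a₁ tstar = (tstar - T₁) ^ 2 / 2 := by
    unfold stepQ
    rw [← hT1, max_eq_left (by rw [hts]; nlinarith)]
  have h2 : stepQ f A a₂ tstar = (tstar - T₂) ^ 2 / 2 := by
    unfold stepQ
    rw [← hT2, max_eq_left (by rw [hts]; nlinarith)]
  have hge : s ≤ stepQ f A a₁ tstar - stepQ f A a₂ tstar := by
    rw [h1, h2, hts]
    nlinarith [sq_nonneg d]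
  have hcont : ContinuousOn (fun t => stepQ f A a₁ t - stepQ f A a₂ t)
      (Set.Icc 0 tstar) := by
    apply Continuous.continuousOn
    unfold stepQ
    fun_prop
  have hts0 : (0:ℝ) ≤ tstar := by rw [hts]; linarith
  have hivt := intermediate_value_Icc hts0 hcont
  have hsmem : s ∈ Set.Icc ((fun t => stepQ f A a₁ t - stepQ f A a₂ t) 0)
      ((fun t => stepQ f A a₁ t - stepQ f A a₂ t) tstar) := by
    constructor
    · simp only [stepQ_zero]
      linarith
    · simpa using hge
  obtain ⟨t, htm, hteq⟩ := hivt hsmem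
  exact ⟨t, htm.1, hteq⟩

/-- Piecewise constant force in `ℝ^d`, equal to `F₁` on the half-space
`Π₁ = {y : y^d < A}` and `F₂` on `Π₂ = {y : y^d ≥ A}`, with `F₁^d > 0`, `F₂^d ≥ 0`, `A > 0`.
Let `Λ` be the closure of a nonempty open connected subset of `Π₁` and suppose all particles
start at rest.  Then there are no collisions on `[0,∞)` iff `F₁^d ≤ F₂^d`. -/
theorem step_force_multidim_no_collisions_iff
    {n : ℕ}
    (F₁ F₂ : EuclideanSpace ℝ (Fin (n + 1))) (A : ℝ)
    (hA : 0 < A) (hF₁ : 0 < F₁ (Fin.last n)) (hF₂ : 0 ≤ F₂ (Fin.last n))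
    (S Λ : Set (EuclideanSpace ℝ (Fin (n + 1))))
    (hS_open : IsOpen S) (hS_conn : IsConnected S)
    (hS_sub : S ⊆ {z : EuclideanSpace ℝ (Fin (n + 1)) | z (Fin.last n) < A})
    (hΛ : Λ = closure S)
    (hΛ_sub : Λ ⊆ {z : EuclideanSpace ℝ (Fin (n + 1)) | z (Fin.last n) < A}) :
    (∀ t, 0 ≤ t → ∀ x₁ ∈ Λ, ∀ x₂ ∈ Λ, x₁ ≠ x₂ →
        stepTrajMulti F₁ F₂ A x₁ t ≠ stepTrajMulti F₁ F₂ A x₂ t) ↔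
      F₁ (Fin.last n) ≤ F₂ (Fin.last n) := by
  constructor
  · -- no collisions → F₁^d ≤ F₂^d
    intro hcol
    by_contra hlt
    push_neg at hlt
    obtain ⟨c, hc⟩ := hS_conn.nonempty
    obtain ⟨ρ, hρ, hball⟩ := Metric.isOpen_iff.mp hS_open c hc
    set u : EuclideanSpace ℝ (Fin (n + 1)) := F₂ - F₁ with hu
    have hgval : u (Fin.last n) = F₂ (Fin.last n) - F₁ (Fin.last n) := by
      rw [hu]; simp
    have hgneg : u (Fin.last n) < 0 := by rw [hgval]; linarith
    have hu0 : u ≠ 0 := by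
      intro h
      rw [h] at hgneg
      simp at hgneg
    have hnu : (0:ℝ) < ‖u‖ := norm_pos_iff.mpr hu0
    set s : ℝ := ρ / (2 * ‖u‖) with hs
    have hspos : 0 < s := by positivity
    set x₂ : EuclideanSpace ℝ (Fin (n + 1)) := c + s • u with hx2
    have hx2S : x₂ ∈ S := by
      apply hball
      rw [Metric.mem_ball]
      have hdist : dist x₂ c = ‖s • u‖ := by
        rw [hx2, dist_eq_norm, add_sub_cancel_left]
      rw [hdist, norm_smul, Real.norm_eq_abs, abs_of_pos hspos]
      have : s * ‖u‖ = ρ / 2 := by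
        rw [hs]; field_simp
      rw [this]; linarith
    have hcΛ : c ∈ Λ := hΛ ▸ subset_closure hc
    have hx2Λ : x₂ ∈ Λ := hΛ ▸ subset_closure hx2S
    have hne : c ≠ x₂ := by
      rw [hx2]
      intro h
      exact smul_ne_zero (ne_of_gt hspos) hu0 (left_eq_add.mp h)
    have ha1A : c (Fin.last n) < A := hΛ_sub hcΛ
    have ha2 : x₂ (Fin.last n) = c (Fin.last n) + s * u (Fin.last n) := by
      rw [hx2]
      simp [PiLp.add_apply, PiLp.smul_apply, smul_eq_mul]
    have ha21 : x₂ (Fin.last n) < c (Fin.last n) := by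
      rw [ha2]; nlinarith
    obtain ⟨t, ht0, hφt⟩ := exists_collision_time (F₁ (Fin.last n)) A
      (c (Fin.last n)) (x₂ (Fin.last n)) s hF₁ ha1A ha21 hspos
    apply hcol t ht0 c hcΛ x₂ hx2Λ hne
    rw [stepTraj_eq, stepTraj_eq]
    have hq : stepQ (F₁ (Fin.last n)) A (c (Fin.last n)) t
        = stepQ (F₁ (Fin.last n)) A (x₂ (Fin.last n)) t + s := by linarith
    rw [hq, hx2, hu]
    module
  · -- F₁^d ≤ F₂^d → no collisions
    intro hle t ht x₁ hx₁ x₂ hx₂ hne heq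
    rw [stepTraj_eq, stepTraj_eq] at heq
    have heq' : x₁ + stepQ (F₁ (Fin.last n)) A (x₁ (Fin.last n)) t • (F₂ - F₁)
        = x₂ + stepQ (F₁ (Fin.last n)) A (x₂ (Fin.last n)) t • (F₂ - F₁) := by
      rw [add_right_comm x₁, add_right_comm x₂] at heq
      exact add_right_cancel heq
    have hco := congrArg (fun v : EuclideanSpace ℝ (Fin (n + 1)) => v (Fin.last n)) heq'
    simp only [PiLp.add_apply, PiLp.smul_apply, PiLp.sub_apply, smul_eq_mul] at hco
    have hg : (0:ℝ) ≤ F₂ (Fin.last n) - F₁ (Fin.last n) := by linarith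
    rcases lt_trichotomy (x₁ (Fin.last n)) (x₂ (Fin.last n)) with h12 | h12 | h12
    · have hQ : stepQ (F₁ (Fin.last n)) A (x₁ (Fin.last n)) t
          ≤ stepQ (F₁ (Fin.last n)) A (x₂ (Fin.last n)) t := by
        have := stepT_antitone (A := A) (le_of_lt h12) hF₁
        exact stepQ_mono t this
      nlinarith
    · rw [h12] at heq'
      exact hne (add_right_cancel heq')
    · have hQ : stepQ (F₁ (Fin.last n)) A (x₂ (Fin.last n)) t
          ≤ stepQ (F₁ (Fin.last n)) A (x₁ (Fin.last n)) t := by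
        have := stepT_antitone (A := A) (le_of_lt h12) hF₁
        exact stepQ_mono t this
      nlinarith
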